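/- Let k ≥ 4 and s > t ≥ 1 be fixed integers, let 0 ≤ m ≤ s − t, and let n be sufficiently large. Write q = ⌊n/(k−1)⌋, r = n − (k−1)q, and Δ_m = (2(k−1)(k−2)(s−t−m) + (k−2)(k−1−r)r)^{1/2} / ((k−1)(k−2)). Then the minimum of ∏_{i=2}^{k−1} x_i over all tuples (x₁, …, x_{k−1}) of nonnegative real numbers satisfying Σ_{i=1}^{k−1} x_i = n and Σ_{i=1}^{k−1} x_i² = n² − 2t_{k−1}(n) + 2(s − t − m) equals (n/(k−1) − Δ_m)^{k−2}, and it is attained at the point with x₁ = n/(k−1) + (k−2)Δ_m and x₂ = ⋯ = x_{k−1} = n/(k−1) − Δ_m. -/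

import Mathlib

open Finset SimpleGraph

/-- Number of `k`-cliques of a graph. -/
noncomputable def cliqueCount {V : Type*} (G : SimpleGraph V) (k : ℕ) : ℕ :=
  Nat.card {T : Finset V // G.IsNClique k T}

/-- `K_k`-covering number: minimum size of a vertex set meeting every `k`-clique. -/
noncomputable def cliqueCover {V : Type*} [Fintype V] [DecidableEq V]
    (G : SimpleGraph V) (k : ℕ) : ℕ :=
  sInf {m | ∃ S : Finset V, S.card = m ∧ ∀ T : Finset V, G.IsNClique k T → ∃ v ∈ T, v ∈ S}

/-- Number of edges of a graph. -/
noncomputable def edgeCount {V : Type*} (G : SimpleGraph V) : ℕ := Nat.card G.edgeSet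

/-- Number of edges of the Turán graph `T_r(n)`. -/
noncomputable def turanEdges (r n : ℕ) : ℕ := edgeCount (turanGraph n r)

/-- `e(n) = n² - 4⌊n²/4⌋`. -/
def eDef (n : ℕ) : ℕ := n ^ 2 - 4 * (n ^ 2 / 4)

/-- `m_{s,t}(n)`: least `m` such that `4s - 4t - 4m + e(n)` is a perfect square. -/
noncomputable def mst (s t n : ℕ) : ℕ :=
  sInf {m : ℕ | ∃ p : ℕ, (p : ℤ) ^ 2 = 4 * s - 4 * t - 4 * m + eDef n}

/-- `R₃(n,s,t) = (4s - 4t - 4m_{s,t}(n) + e(n))^{1/2}`. -/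
noncomputable def R3 (s t n : ℕ) : ℕ :=
  Nat.sqrt (4 * (s : ℤ) - 4 * t - 4 * mst s t n + eDef n).toNat

/-- Number of copies of `F` in `G`: subgraphs of `G` isomorphic to `F`. -/
noncomputable def copyCount {α V : Type*} (F : SimpleGraph α) (G : SimpleGraph V) : ℕ :=
  Nat.card {H : G.Subgraph // Nonempty (F ≃g H.coe)}

/-- `F`-covering number of `G`. -/
noncomputable def coverNumber {α V : Type*} [Fintype V] [DecidableEq V]
    (F : SimpleGraph α) (G : SimpleGraph V) : ℕ :=
  sInf {m | ∃ S : Finset V, S.card = m ∧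
    ∀ H : G.Subgraph, Nonempty (F ≃g H.coe) → ∃ v ∈ H.verts, v ∈ S}

/-- A graph `F` is `k`-critical. -/
def IsCritical {α : Type*} (k : ℕ) (F : SimpleGraph α) : Prop :=
  F.chromaticNumber = k ∧ ∃ e ∈ F.edgeSet, (F.deleteEdges {e}).chromaticNumber < k

/-- `c(n,F)`: minimum number of copies of `F` after adding one new edge to `T_{k-1}(n)`. -/
noncomputable def cnF {α : Type*} (k n : ℕ) (F : SimpleGraph α) : ℕ :=
  sInf {c | ∃ u v : Fin n, u ≠ v ∧ ¬ (turanGraph n (k - 1)).Adj u v ∧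
    c = copyCount F (turanGraph n (k - 1) ⊔ fromEdgeSet {s(u, v)})}

/-- `N_k(n,s)` from Theorem 1.3. -/
def NkBound (k s n : ℕ) : ℕ :=
  if n % (k - 1) = 0 then s * (n / (k - 1)) ^ (k - 3) * (n / (k - 1) - 1)
  else if n % (k - 1) = 1 then s * (n / (k - 1)) ^ (k - 2) - (n / (k - 1)) ^ (k - 3)
  else s * (n / (k - 1) + 1) ^ (n % (k - 1) - 2) * (n / (k - 1)) ^ (k - n % (k - 1))

/-- `R_k(n,s,t)`. -/
noncomputable def Rk (k s t n : ℕ) : ℝ :=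
  Real.sqrt ((2 * ((k : ℝ) - 1) * ((s : ℝ) - t) +
    ((k : ℝ) - 1 - (n % (k - 1) : ℕ)) * (n % (k - 1) : ℕ)) / ((k : ℝ) - 2))

/-- `c(x₁,…,x_{k-1},F)`: copies of `F` in the complete multipartite graph with parts
`Fin (x i)` plus one edge inside part `0`. -/
noncomputable def cParts {α : Type*} (k : ℕ) (x : Fin (k - 1) → ℕ) (F : SimpleGraph α) : ℕ :=
  sInf {c | ∃ i₀ : Fin (k - 1), ∃ a b : Fin (x i₀), (i₀ : ℕ) = 0 ∧ a ≠ b ∧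
    c = copyCount F (completeMultipartiteGraph (fun i => Fin (x i)) ⊔
      fromEdgeSet {s(⟨i₀, a⟩, ⟨i₀, b⟩)})}

/-! Put `K = k - 1` and `a = n / K`. The Turán identity `K (n² - 2 t_K(n)) = n² + r (K - r)`
turns the constraints into `∑ xᵢ = K a` and `∑ (xᵢ - a)² = K (K - 1) Δ²`, so by Cauchy–Schwarz
every `xᵢ` lies within `(K - 1) Δ` of `a`. Since `Δ` stays bounded, for large `n` every `xᵢ` is at
least `L := a - (K - 1) Δ > 2 K Δ`. With `e = a - Δ`, the inequality
`log (x / e) ≥ 1 - e / x ≥ (x - e) / e - (x - e)² / (e L)` reduces `∏_{i ≠ 0} xᵢ ≥ e ^ (K - 1)` to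
`∑_{i ≠ 0} (xᵢ - e)² ≤ L ∑_{i ≠ 0} (xᵢ - e)`. The right-hand sum is `D = a + (K - 1) Δ - x₀ ≥ 0`,
and the left-hand one factors as `D ((K + 1) Δ + x₀ - a) ≤ 2 K Δ D`. -/

theorem pow_card_le_prod_of_sum_div_le {ι : Type*} {s : Finset ι} {x : ι → ℝ} {e : ℝ}
    (he : 0 < e) (hx : ∀ i ∈ s, 0 < x i) (h : ∑ i ∈ s, e / x i ≤ #s) :
    e ^ #s ≤ ∏ i ∈ s, x i := by
  rw [← Real.log_le_log_iff (by positivity) (prod_pos hx), Real.log_pow,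
    Real.log_prod fun i hi => (hx i hi).ne', ← sub_nonneg, ← nsmul_eq_mul, ← sum_const,
    ← sum_sub_distrib]
  calc (0 : ℝ) ≤ ∑ i ∈ s, (1 - e / x i) := by
        rw [sum_sub_distrib, sum_const, nsmul_one]; linarith
    _ ≤ ∑ i ∈ s, (Real.log (x i) - Real.log e) := by
        refine sum_le_sum fun i hi => ?_
        rw [← Real.log_div (hx i hi).ne' he.ne', ← inv_div]
        exact Real.one_sub_inv_le_log_of_pos (div_pos (hx i hi) he)

theorem sub_div_sub_sq_div_le_one_sub_div {L e x : ℝ} (hL : 0 < L) (he : 0 < e) (hx : L ≤ x) :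
    (x - e) / e - (x - e) ^ 2 / (e * L) ≤ 1 - e / x := by
  have hx0 : 0 < x := hL.trans_le hx
  have h : 1 - e / x = (x - e) / e - (x - e) ^ 2 / (e * x) := by field_simp; ring
  rw [h]
  gcongr

section SumOfSquares

variable {ι : Type*} [Fintype ι]

theorem sum_sub_sq_eq_of_sum_eq {x : ι → ℝ} {a : ℝ} (hsum : ∑ i, x i = Fintype.card ι * a) :
    ∑ i, (x i - a) ^ 2 = ∑ i, x i ^ 2 - Fintype.card ι * a ^ 2 := by
  simp only [sub_sq, sum_add_distrib, sum_sub_distrib, ← sum_mul, ← mul_sum, hsum, sum_const,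
    card_univ, nsmul_eq_mul]
  ring

theorem card_mul_sq_le_of_sum_eq_zero {d : ι → ℝ} (hd : ∑ i, d i = 0) (j : ι) :
    Fintype.card ι * d j ^ 2 ≤ (Fintype.card ι - 1) * ∑ i, d i ^ 2 := by
  classical
  have hcs := sq_sum_le_card_mul_sum_sq (s := univ.erase j) (f := d)
  rw [sum_erase_eq_sub (mem_univ j), sum_erase_eq_sub (mem_univ j), hd,
    card_erase_of_mem (mem_univ j), card_univ,
    Nat.cast_pred (Fintype.card_pos_iff.mpr ⟨j⟩)] at hcs
  linarith

theorem abs_sub_le_of_sum_sq_eq {x : ι → ℝ} {a Δ : ℝ} (hΔ : 0 ≤ Δ)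
    (hsum : ∑ i, x i = Fintype.card ι * a)
    (hsq : ∑ i, x i ^ 2 = Fintype.card ι * a ^ 2 + Fintype.card ι * (Fintype.card ι - 1) * Δ ^ 2)
    (j : ι) : |x j - a| ≤ (Fintype.card ι - 1) * Δ := by
  have hK : (1 : ℝ) ≤ Fintype.card ι := by exact_mod_cast Fintype.card_pos_iff.mpr ⟨j⟩
  have hdev := card_mul_sq_le_of_sum_eq_zero (d := fun i => x i - a)
    (by rw [sum_sub_distrib, hsum, sum_const, card_univ, nsmul_eq_mul, sub_self]) j
  rw [sum_sub_sq_eq_of_sum_eq hsum, hsq] at hdev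
  apply abs_le_of_sq_le_sq _ (by nlinarith)
  nlinarith

theorem pow_le_prod_erase_of_sum_sq_eq [DecidableEq ι] {x : ι → ℝ}
    {a Δ : ℝ} (i₀ : ι) (hΔ : 0 ≤ Δ) (ha : (3 * Fintype.card ι - 1) * Δ < a)
    (hsum : ∑ i, x i = Fintype.card ι * a)
    (hsq : ∑ i, x i ^ 2 = Fintype.card ι * a ^ 2 + Fintype.card ι * (Fintype.card ι - 1) * Δ ^ 2) :
    (a - Δ) ^ (Fintype.card ι - 1) ≤ ∏ i ∈ univ.erase i₀, x i := by
  set K : ℝ := (Fintype.card ι : ℝ)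
  set e := a - Δ
  set L := a - (K - 1) * Δ
  set D := a + (K - 1) * Δ - x i₀
  have hK : 1 ≤ K := Nat.one_le_cast.mpr (Fintype.card_pos_iff.mpr ⟨i₀⟩)
  have hdev := abs_sub_le_of_sum_sq_eq hΔ hsum hsq
  have hL : 2 * K * Δ < L := by linarith
  have hxL : ∀ i, L ≤ x i := fun i => by linarith [neg_abs_le (x i - a), hdev i]
  have hD : 0 ≤ D := by linarith [le_abs_self (x i₀ - a), hdev i₀]
  have he : 0 < e := by nlinarith
  have hcard : #(univ.erase i₀) = Fintype.card ι - 1 := by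
    rw [card_erase_of_mem (mem_univ i₀), card_univ]
  have hcardR : (#(univ.erase i₀) : ℝ) = K - 1 := by
    rw [hcard, Nat.cast_pred (Fintype.card_pos_iff.mpr ⟨i₀⟩)]
  have hS1 : ∑ i ∈ univ.erase i₀, (x i - e) = D := by
    rw [sum_sub_distrib, sum_const, nsmul_eq_mul, hcardR, sum_erase_eq_sub (mem_univ i₀), hsum]
    ring
  have hS2 : ∑ i ∈ univ.erase i₀, (x i - e) ^ 2 = D * ((K + 1) * Δ + x i₀ - a) := by
    simp only [sub_sq, sum_add_distrib, sum_sub_distrib, ← sum_mul, ← mul_sum, sum_const,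
      nsmul_eq_mul, hcardR]
    rw [sum_erase_eq_sub (mem_univ i₀), sum_erase_eq_sub (mem_univ i₀), hsum, hsq]
    ring
  have hL0 : 0 < L := by nlinarith
  have hquad : D * ((K + 1) * Δ + x i₀ - a) / (e * L) ≤ D / e :=
    calc D * ((K + 1) * Δ + x i₀ - a) / (e * L) ≤ D * L / (e * L) := by
          gcongr; linarith [le_abs_self (x i₀ - a), hdev i₀]
      _ = D / e := by field_simp
  have hterm := sum_le_sum fun i (_ : i ∈ univ.erase i₀) =>
    sub_div_sub_sq_div_le_one_sub_div hL0 he (hxL i)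
  rw [sum_sub_distrib, sum_sub_distrib, ← sum_div, ← sum_div, hS1, hS2, sum_const,
    nsmul_one] at hterm
  rw [← hcard]
  exact pow_card_le_prod_of_sum_div_le he (fun i _ => hL0.trans_le (hxL i)) (by linarith)

theorem sum_sum_sq_prod_erase_of_eq [DecidableEq ι] {x : ι → ℝ}
    {a Δ : ℝ} (i₀ : ι) (hx₀ : x i₀ = a + (Fintype.card ι - 1) * Δ)
    (hx : ∀ i ∈ univ.erase i₀, x i = a - Δ) :
    ∑ i, x i = Fintype.card ι * a ∧
      ∑ i, x i ^ 2 = Fintype.card ι * a ^ 2 + Fintype.card ι * (Fintype.card ι - 1) * Δ ^ 2 ∧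
      ∏ i ∈ univ.erase i₀, x i = (a - Δ) ^ (Fintype.card ι - 1) := by
  have hcard : #(univ.erase i₀) = Fintype.card ι - 1 := by
    rw [card_erase_of_mem (mem_univ i₀), card_univ]
  have hcardR : (#(univ.erase i₀) : ℝ) = Fintype.card ι - 1 := by
    rw [hcard, Nat.cast_pred (Fintype.card_pos_iff.mpr ⟨i₀⟩)]
  refine ⟨?_, ?_, ?_⟩
  · rw [← add_sum_erase _ _ (mem_univ i₀), sum_congr rfl hx, sum_const, nsmul_eq_mul, hcardR,
      hx₀]
    ring
  · rw [← add_sum_erase _ _ (mem_univ i₀), sum_congr rfl fun i hi => by rw [hx i hi],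
      sum_const, nsmul_eq_mul, hcardR, hx₀]
    ring
  · rw [prod_congr rfl hx, prod_const, hcard]

end SumOfSquares

theorem turanEdges_eq_card_edgeFinset (r n : ℕ) :
    turanEdges r n = #(turanGraph n r).edgeFinset := by
  rw [turanEdges, edgeCount, Nat.card_eq_card_toFinset]
  rfl

theorem two_mul_card_edgeFinset_turanGraph_add_sum_sq {n K : ℕ} (hK : 0 < K) :
    2 * #(turanGraph n K).edgeFinset + (K - n % K) * (n / K) ^ 2 + n % K * (n / K + 1) ^ 2
      = n ^ 2 := by
  -- `T_K(n)` has `K - r` parts of size `q` and `r` parts of size `q + 1`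
  set q := n / K
  set r := n % K
  have hn : n = K * q + r := (Nat.div_add_mod n K).symm
  have hr : r < K := Nat.mod_lt n hK
  obtain ⟨j, hj⟩ := Nat.even_mul_pred_self K
  have hdiv : (n ^ 2 - r ^ 2) * (K - 1) / (2 * K) = q * r * (K - 1) + j * q ^ 2 := by
    apply Nat.div_eq_of_eq_mul_left (by omega)
    have hsq : n ^ 2 - r ^ 2 = K * q * (K * q + 2 * r) := by
      rw [hn]; exact Nat.sub_eq_of_eq_add (by ring)
    rw [hsq]
    linear_combination (K * q ^ 2) * hj
  have hchoose : 2 * r.choose 2 + r = r ^ 2 := by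
    rw [Nat.choose_two_right, Nat.two_mul_div_two_of_even (Nat.even_mul_pred_self r)]
    cases r <;> simp; ring
  rw [card_edgeFinset_turanGraph, hdiv]
  zify [hr.le, hK] at hj hchoose ⊢
  have hn : (n : ℤ) = K * q + r := by exact_mod_cast hn
  linear_combination (-(q : ℤ) ^ 2) * hj + hchoose - (n + K * q + r) * hn

theorem mul_sq_sub_two_mul_turanEdges {n K : ℕ} (hK : 0 < K) :
    (K : ℝ) * (n ^ 2 - 2 * turanEdges K n) = n ^ 2 + (n % K : ℕ) * (K - (n % K : ℕ)) := by
  have h := two_mul_card_edgeFinset_turanGraph_add_sum_sq (n := n) hK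
  rw [← turanEdges_eq_card_edgeFinset] at h
  have hn : (n : ℝ) = K * (n / K : ℕ) + (n % K : ℕ) := by exact_mod_cast (Nat.div_add_mod n K).symm
  have h' : (2 * turanEdges K n + (K - n % K) * (n / K) ^ 2 + n % K * (n / K + 1) ^ 2 : ℕ)
      = (n ^ 2 : ℝ) := by exact_mod_cast h
  push_cast [Nat.cast_sub (Nat.mod_lt n hK).le] at h'
  linear_combination (-(K : ℝ)) * h' - (n + K * (n / K : ℕ) + (n % K : ℕ)) * hn

theorem mul_mul_sq_eq_of_eq_sqrt {K σ r Δ : ℝ} (hK : 1 < K) (hσ : 0 ≤ σ) (hr₀ : 0 ≤ r)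
    (hr : r ≤ K) (hΔ : Δ = √(2 * K * (K - 1) * σ + (K - 1) * (K - r) * r) / (K * (K - 1))) :
    K * (K - 1) * Δ ^ 2 = (2 * K * σ + (K - r) * r) / K := by
  have hK₁ : K - 1 ≠ 0 := by linarith
  rw [hΔ, div_pow, Real.sq_sqrt (by positivity)]
  field_simp

theorem sq_sub_two_mul_turanEdges_add_eq {K n : ℕ} {σ Δ : ℝ} (hK : 0 < K)
    (hΔ : K * (K - 1) * Δ ^ 2 = (2 * K * σ + (K - (n % K : ℕ)) * (n % K : ℕ)) / K) :
    (n : ℝ) ^ 2 - 2 * turanEdges K n + 2 * σ = K * (n / K) ^ 2 + K * (K - 1) * Δ ^ 2 := by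
  have hK₀ : (K : ℝ) ≠ 0 := by positivity
  rw [hΔ]
  field_simp
  linear_combination mul_sq_sub_two_mul_turanEdges (n := n) hK

theorem le_add_one_of_mul_mul_sq_eq {K σ r Δ : ℝ} (hK : 3 ≤ K) (hσ : 0 ≤ σ) (hΔ : 0 ≤ Δ)
    (h : K * (K - 1) * Δ ^ 2 = (2 * K * σ + (K - r) * r) / K) : Δ ≤ σ + 1 := by
  have hK0 : K ≠ 0 := by linarith
  have h' : K ^ 2 * (K - 1) * Δ ^ 2 = 2 * K * σ + (K - r) * r := by
    field_simp at h; linear_combination h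
  have hr : (K - r) * r ≤ K ^ 2 := by nlinarith [sq_nonneg (K - 2 * r)]
  have hc : 0 < K ^ 2 * (K - 1) := mul_pos (by positivity) (by linarith)
  have hsq : K ^ 2 * (K - 1) * Δ ^ 2 ≤ K ^ 2 * (K - 1) * (σ + 1) ^ 2 := by
    rw [h']
    nlinarith [mul_nonneg (mul_nonneg (sq_nonneg K) (by linarith : (0 : ℝ) ≤ K - 3))
      (sq_nonneg (σ + 1)), mul_nonneg (sq_nonneg K) (sq_nonneg σ)]
  exact (pow_le_pow_iff_left₀ hΔ (by linarith) two_ne_zero).mp (le_of_mul_le_mul_left hsq hc)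

theorem Fin.filter_val_ne_zero_eq_erase {K : ℕ} (hK : 0 < K) :
    univ.filter (fun i : Fin K => (i : ℕ) ≠ 0) = univ.erase ⟨0, hK⟩ := by
  ext i
  simp [Fin.ext_iff]

theorem isLeast_prod_of_sum_sq_eq_turanEdges {K n : ℕ} {σ Δ : ℝ} (hK : 3 ≤ K) (hσ : 0 ≤ σ)
    (hn : 3 * K ^ 2 * (σ + 1) ≤ n)
    (hΔ : Δ = √(2 * K * (K - 1) * σ + (K - 1) * (K - (n % K : ℕ)) * (n % K : ℕ)) /
      (K * (K - 1)))
    {xstar : Fin K → ℝ}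
    (hxstar : xstar = fun i : Fin K => if (i : ℕ) = 0 then (n : ℝ) / K + (K - 1) * Δ else n / K - Δ) :
    IsLeast {y : ℝ | ∃ x : Fin K → ℝ, (∀ i, 0 ≤ x i) ∧ ∑ i, x i = n ∧
        ∑ i, x i ^ 2 = (n : ℝ) ^ 2 - 2 * turanEdges K n + 2 * σ ∧
        y = ∏ i ∈ univ.filter (fun i : Fin K => (i : ℕ) ≠ 0), x i}
      (((n : ℝ) / K - Δ) ^ (K - 1)) ∧
    (∀ i, 0 ≤ xstar i) ∧ ∑ i, xstar i = n ∧
    ∑ i, xstar i ^ 2 = (n : ℝ) ^ 2 - 2 * turanEdges K n + 2 * σ ∧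
    ∏ i ∈ univ.filter (fun i : Fin K => (i : ℕ) ≠ 0), xstar i = ((n : ℝ) / K - Δ) ^ (K - 1) := by
  have hKR : (3 : ℝ) ≤ K := by exact_mod_cast hK
  have hΔ₀ : 0 ≤ Δ := hΔ ▸ div_nonneg (Real.sqrt_nonneg _) (by nlinarith)
  have hΔsq := mul_mul_sq_eq_of_eq_sqrt (by linarith) hσ (Nat.cast_nonneg _)
    (by exact_mod_cast (Nat.mod_lt n (by omega)).le) hΔ
  have hsq := sq_sub_two_mul_turanEdges_add_eq (by omega) hΔsq
  set a : ℝ := (n : ℝ) / K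
  have hsum : (n : ℝ) = K * a := by simp only [a]; field_simp
  have ha : (3 * K - 1) * Δ < a := by
    have hΔσ := le_add_one_of_mul_mul_sq_eq hKR hσ hΔ₀ hΔsq
    rw [lt_div_iff₀ (by positivity)]
    nlinarith [mul_le_mul_of_nonneg_left hΔσ (by nlinarith : (0 : ℝ) ≤ (3 * K - 1) * K)]
  have hx₀ : xstar ⟨0, by omega⟩ = a + (Fintype.card (Fin K) - 1) * Δ := by
    rw [Fintype.card_fin, hxstar]; simp
  have hx : ∀ i ∈ univ.erase ⟨0, by omega⟩, xstar i = a - Δ := by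
    intro i hi
    simp only [hxstar]
    rw [if_neg (by simpa [Fin.ext_iff] using hi)]
  have hnonneg : ∀ i, 0 ≤ xstar i := by
    intro i
    simp only [hxstar]
    split_ifs <;> nlinarith
  obtain ⟨hs1, hs2, hprod⟩ := sum_sum_sq_prod_erase_of_eq _ hx₀ hx
  rw [Fin.filter_val_ne_zero_eq_erase (by omega), hsq, hsum]
  simp only [Fintype.card_fin] at hs1 hs2 hprod
  refine ⟨⟨⟨xstar, hnonneg, hs1, hs2, hprod.symm⟩, ?_⟩, hnonneg, hs1, hs2, hprod⟩
  rintro y ⟨x, -, hx1, hx2, rfl⟩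
  have hcard : (Fintype.card (Fin K) : ℝ) = K := by rw [Fintype.card_fin]
  rw [← hcard] at hx1 hx2 ha
  simpa only [Fintype.card_fin] using pow_le_prod_erase_of_sum_sq_eq _ hΔ₀ ha hx1 hx2

theorem stmt_17_general (k s t m : ℕ) (hk : 4 ≤ k) (hts : t < s) (hm : m ≤ s - t) :
    ∃ n₀ : ℕ, ∀ n ≥ n₀, ∀ Δ : ℝ,
      Δ = Real.sqrt (2 * ((k : ℝ) - 1) * ((k : ℝ) - 2) * ((s : ℝ) - t - m) +
            ((k : ℝ) - 2) * ((k : ℝ) - 1 - (n % (k - 1) : ℕ)) * (n % (k - 1) : ℕ)) /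
          (((k : ℝ) - 1) * ((k : ℝ) - 2)) →
      ∀ xstar : Fin (k - 1) → ℝ,
        xstar = (fun i : Fin (k - 1) => if (i : ℕ) = 0 then
            (n : ℝ) / ((k : ℝ) - 1) + ((k : ℝ) - 2) * Δ
          else (n : ℝ) / ((k : ℝ) - 1) - Δ) →
      IsLeast {y : ℝ | ∃ x : Fin (k - 1) → ℝ, (∀ i, 0 ≤ x i) ∧ (∑ i, x i) = n ∧
            (∑ i, x i ^ 2) =
              (n : ℝ) ^ 2 - 2 * turanEdges (k - 1) n + 2 * ((s : ℝ) - t - m) ∧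
            y = ∏ i ∈ Finset.univ.filter (fun i : Fin (k - 1) => (i : ℕ) ≠ 0), x i}
          (((n : ℝ) / ((k : ℝ) - 1) - Δ) ^ (k - 2)) ∧
        (∀ i, 0 ≤ xstar i) ∧ (∑ i, xstar i) = n ∧
        (∑ i, xstar i ^ 2) =
          (n : ℝ) ^ 2 - 2 * turanEdges (k - 1) n + 2 * ((s : ℝ) - t - m) ∧
        (∏ i ∈ Finset.univ.filter (fun i : Fin (k - 1) => (i : ℕ) ≠ 0), xstar i) =
          ((n : ℝ) / ((k : ℝ) - 1) - Δ) ^ (k - 2) := by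
  refine ⟨3 * k ^ 2 * (s + 1), fun n hn Δ hΔ xstar hxstar => ?_⟩
  have hk1 : (k : ℝ) - 1 = ((k - 1 : ℕ) : ℝ) := by rw [Nat.cast_pred (by omega)]
  have hk2 : (k : ℝ) - 2 = ((k - 1 : ℕ) : ℝ) - 1 := by rw [← hk1]; ring
  have hσ : 0 ≤ (s : ℝ) - t - m := by
    have : ((m + t : ℕ) : ℝ) ≤ s := by exact_mod_cast (by omega : m + t ≤ s)
    push_cast at this
    linarith
  have hn' : 3 * ((k - 1 : ℕ) : ℝ) ^ 2 * ((s : ℝ) - t - m + 1) ≤ n := by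
    have hK : ((k - 1 : ℕ) : ℝ) ≤ k := by exact_mod_cast Nat.sub_le k 1
    have hn : (3 * k ^ 2 * (s + 1) : ℝ) ≤ n := by exact_mod_cast hn
    refine le_trans ?_ hn
    gcongr
    linarith [Nat.cast_nonneg (α := ℝ) t, Nat.cast_nonneg (α := ℝ) m]
  rw [show k - 2 = k - 1 - 1 by omega]
  simp only [hk1, hk2] at hΔ hxstar ⊢
  exact isLeast_prod_of_sum_sq_eq_turanEdges (by omega) hσ hn' hΔ hxstar

/-- solution of the optimization problem `OPT_m-C`: the minimum of
`∏_{i=2}^{k-1} x_i` over nonnegative reals with `Σ x_i = n` and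
`Σ x_i² = n² - 2t_{k-1}(n) + 2(s - t - m)` is `(n/(k-1) - Δ_m)^{k-2}`, attained at
`x₁ = n/(k-1) + (k-2)Δ_m`, `x₂ = ⋯ = x_{k-1} = n/(k-1) - Δ_m`. -/
theorem stmt_17 (k s t m : ℕ) (hk : 4 ≤ k) (ht : 1 ≤ t) (hts : t < s) (hm : m ≤ s - t) :
    ∃ n₀ : ℕ, ∀ n ≥ n₀, ∀ Δ : ℝ,
      Δ = Real.sqrt (2 * ((k : ℝ) - 1) * ((k : ℝ) - 2) * ((s : ℝ) - t - m) +
            ((k : ℝ) - 2) * ((k : ℝ) - 1 - (n % (k - 1) : ℕ)) * (n % (k - 1) : ℕ)) /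
          (((k : ℝ) - 1) * ((k : ℝ) - 2)) →
      ∀ xstar : Fin (k - 1) → ℝ,
        xstar = (fun i : Fin (k - 1) => if (i : ℕ) = 0 then
            (n : ℝ) / ((k : ℝ) - 1) + ((k : ℝ) - 2) * Δ
          else (n : ℝ) / ((k : ℝ) - 1) - Δ) →
      IsLeast {y : ℝ | ∃ x : Fin (k - 1) → ℝ, (∀ i, 0 ≤ x i) ∧ (∑ i, x i) = n ∧
            (∑ i, x i ^ 2) =
              (n : ℝ) ^ 2 - 2 * turanEdges (k - 1) n + 2 * ((s : ℝ) - t - m) ∧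
            y = ∏ i ∈ Finset.univ.filter (fun i : Fin (k - 1) => (i : ℕ) ≠ 0), x i}
          (((n : ℝ) / ((k : ℝ) - 1) - Δ) ^ (k - 2)) ∧
        (∀ i, 0 ≤ xstar i) ∧ (∑ i, xstar i) = n ∧
        (∑ i, xstar i ^ 2) =
          (n : ℝ) ^ 2 - 2 * turanEdges (k - 1) n + 2 * ((s : ℝ) - t - m) ∧
        (∏ i ∈ Finset.univ.filter (fun i : Fin (k - 1) => (i : ℕ) ≠ 0), xstar i) =
          ((n : ℝ) / ((k : ℝ) - 1) - Δ) ^ (k - 2) :=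
  stmt_17_general k s t m hk hts hm
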